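/- Let H̃ be a finite subgroup of U(1) × SU(2) containing (−1, −1) and (e(1/3), 1) whose projection to SU(2) equals the binary octahedral group 2O, and suppose the subgroup H = π(H̃) of SU(3) satisfies the restricted rationality condition. Then H is conjugate in SU(3) to one of the two subgroups π({(u, g) ∈ μ₁₂ × 2O : u⁶ = χ(g)}) and π({(u, g) ∈ μ₂₄ × 2O : u¹² = χ(g)}), where χ : 2O → {±1} is the unique homomorphism with kernel the binary tetrahedral group 2T. Moreover, the first of these two subgroups is not conjugate in SU(3) to any subgroup of the second. -/

import Mathlib

noncomputable section

open Matrix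

abbrev UG3 := Matrix.unitaryGroup (Fin 3) ℂ

/-- The special unitary group SU(3), as a subgroup of the 3×3 unitary group:
matrices that are unitary and have determinant 1. -/
def SU3 : Subgroup ↥UG3 := MonoidHom.ker (Matrix.detMonoidHom.comp UG3.subtype)

abbrev G3 := ↥SU3

/-- The underlying 3×3 complex matrix of an element of SU(3). -/
def m3 (x : G3) : Matrix (Fin 3) (Fin 3) ℂ := ((x : ↥UG3) : Matrix (Fin 3) (Fin 3) ℂ)

/-- `e(x) = exp(2πi·x)`. -/
def eQ (x : ℚ) : ℂ := Complex.exp (2 * Real.pi * Complex.I * (x : ℂ))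

/-- `D(u,v,w) = diag(e(u), e(v), e(w))`. -/
def Dm (u v w : ℚ) : Matrix (Fin 3) (Fin 3) ℂ := Matrix.diagonal ![eQ u, eQ v, eQ w]

/-- The subgroup of SU(3) generated by the elements whose matrices lie in `s`. -/
def sgOf (s : Set (Matrix (Fin 3) (Fin 3) ℂ)) : Subgroup G3 :=
  Subgroup.closure {x : G3 | m3 x ∈ s}

/-- μ₃ : the subgroup of SU(3) of scalar matrices ζ·1 with ζ³ = 1. -/
def mu3 : Subgroup G3 :=
  sgOf {M | ∃ ζ : ℂ, ζ ^ 3 = 1 ∧ M = ζ • (1 : Matrix (Fin 3) (Fin 3) ℂ)}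

/-- The restricted rationality condition: |Trace A|² ∈ ℤ for all A ∈ H. -/
def RRC (H : Subgroup G3) : Prop :=
  ∀ x ∈ H, ∃ k : ℤ, ‖Matrix.trace (m3 x)‖ ^ 2 = (k : ℝ)

/-- Two subgroups of SU(3) are conjugate if one is carried onto the other by
conjugation by an element of SU(3). -/
def IsConjSub (H K : Subgroup G3) : Prop :=
  ∃ g : G3, Subgroup.map (MulAut.conj g).toMonoidHom H = K

-- matrices S, T₁, T₂, T₄, P₂₃
def Sm : Matrix (Fin 3) (Fin 3) ℂ := !![0, 0, 1; 1, 0, 0; 0, 1, 0]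

def Rm (ξ α : ℂ) : Matrix (Fin 3) (Fin 3) ℂ :=
  !![-(starRingEnd ℂ ξ), 0, 0; 0, 0, -(starRingEnd ℂ α); 0, -(ξ * α), 0]

def T1m : Matrix (Fin 3) (Fin 3) ℂ := Rm 1 1
def T2m : Matrix (Fin 3) (Fin 3) ℂ := Rm (-1) Complex.I
def T4m : Matrix (Fin 3) (Fin 3) ℂ := Rm Complex.I (eQ (3/8))

def P23 : Matrix (Fin 3) (Fin 3) ℂ := !![1, 0, 0; 0, 0, 1; 0, 1, 0]


abbrev UG2 := Matrix.unitaryGroup (Fin 2) ℂ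

/-- The special unitary group SU(2). -/
def SU2 : Subgroup ↥UG2 := MonoidHom.ker (Matrix.detMonoidHom.comp UG2.subtype)

abbrev G2 := ↥SU2

def m2 (x : G2) : Matrix (Fin 2) (Fin 2) ℂ := ((x : ↥UG2) : Matrix (Fin 2) (Fin 2) ℂ)

/-- The 2×2 matrix corresponding to the quaternion a + bi + cj + dk. -/
def qmat (a b c d : ℝ) : Matrix (Fin 2) (Fin 2) ℂ :=
  !![(a : ℂ) + b * Complex.I, (c : ℂ) + d * Complex.I;
     -(c : ℂ) + d * Complex.I, (a : ℂ) - b * Complex.I]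

/-- The binary tetrahedral group 2T = {±1, ±i, ±j, ±k, (±1 ± i ± j ± k)/2},
as a set of 2×2 matrices. -/
def twoT : Set (Matrix (Fin 2) (Fin 2) ℂ) :=
  {qmat 1 0 0 0, qmat (-1) 0 0 0, qmat 0 1 0 0, qmat 0 (-1) 0 0,
   qmat 0 0 1 0, qmat 0 0 (-1) 0, qmat 0 0 0 1, qmat 0 0 0 (-1)} ∪
  {M | ∃ a b c d : ℝ, (a = 1/2 ∨ a = -(1/2)) ∧ (b = 1/2 ∨ b = -(1/2)) ∧
    (c = 1/2 ∨ c = -(1/2)) ∧ (d = 1/2 ∨ d = -(1/2)) ∧ M = qmat a b c d}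

/-- The binary octahedral group 2O = 2T ∪ 2T·((1+i)/√2), as a set of 2×2 matrices. -/
def twoO : Set (Matrix (Fin 2) (Fin 2) ℂ) :=
  twoT ∪ (fun M => M * qmat (Real.sqrt 2)⁻¹ (Real.sqrt 2)⁻¹ 0 0) '' twoT

/-- The 3×3 matrix π(u, A) : block-diagonal with (1,1) entry u² and lower-right
2×2 block u⁻¹·A. -/
def su3block (u : ℂ) (A : Matrix (Fin 2) (Fin 2) ℂ) : Matrix (Fin 3) (Fin 3) ℂ :=
  !![u ^ 2, 0, 0;
     0, u⁻¹ * A 0 0, u⁻¹ * A 0 1;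
     0, u⁻¹ * A 1 0, u⁻¹ * A 1 1]

/-- The map π on U(1) × SU(2), at the matrix level. -/
def piMat (p : ↥(unitary ℂ) × G2) : Matrix (Fin 3) (Fin 3) ℂ :=
  su3block (p.1 : ℂ) (m2 p.2)

/-- π({(u, g) ∈ μ_{2m} × 2O : u^m = χ(g)}) where χ : 2O → {±1} is the unique
homomorphism with kernel 2T, as a set of 3×3 matrices. -/
def BO (m : ℕ) : Set (Matrix (Fin 3) (Fin 3) ℂ) :=
  {M | ∃ u : ℂ, u ^ (2 * m) = 1 ∧ ∃ A ∈ twoO,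
    ((A ∈ twoT ∧ u ^ m = 1) ∨ (A ∉ twoT ∧ u ^ m = -1)) ∧ M = su3block u A}


/-!
Write `C = {u | (u, 1) ∈ H̃}` and `S = (1 + i)/√2 ∈ 2O ∖ 2T`. Every element of `2T` is a
commutator of two elements of `2O ∖ 2T`, and commutators in `U(1) × SU(2)` have trivial
`U(1)`-component, so `(1, g) ∈ H̃` for every `g ∈ 2T`. Hence `H̃` is determined by `C` and by the
`U(1)`-component `s` of one lift of `S`; the two given elements put `μ₆` inside `C`.

For `A ∈ SU(2)` of real trace `t` and `|u| = 1`, `|Tr π(u, A)|² = 1 + t² + 2t Re(u³)`.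
Rationality applied with `A` of trace `1` gives `2 Re(u³) ∈ ℤ` for `u ∈ C`, and applied with
`A = S` gives `2√2 Re((su)³) ∈ ℤ`; these force `C ⊆ μ₁₂`, so `C = μ_m` with `m ∈ {6, 12}`.
Then `s^m = -1`, for otherwise `(1, S) ∈ H̃` and `|Tr π(1, S)|² = 3 + 2√2`. Hence
`H̃ = {(u, g) | u^m = χ(g)}`.

Finally `π(e(1/12), S)` lies in the first group and has `|Tr|² = 3`, a value that no element of
the second group attains.
-/

open Quaternion

section QuaternionMatrices

theorem qmat_inj {a b c d a' b' c' d' : ℝ} :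
    qmat a b c d = qmat a' b' c' d' ↔ a = a' ∧ b = b' ∧ c = c' ∧ d = d' := by
  refine ⟨fun h => ?_, by rintro ⟨rfl, rfl, rfl, rfl⟩; rfl⟩
  have h00 := congrFun (congrFun h 0) 0
  have h01 := congrFun (congrFun h 0) 1
  simp [qmat, Complex.ext_iff] at h00 h01
  exact ⟨h00.1, h00.2, h01.1, h01.2⟩

theorem qmat_mul (a b c d a' b' c' d' : ℝ) :
    qmat a b c d * qmat a' b' c' d' =
      qmat (a * a' - b * b' - c * c' - d * d') (a * b' + b * a' + c * d' - d * c')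
        (a * c' - b * d' + c * a' + d * b') (a * d' + b * c' - c * b' + d * a') := by
  ext i j
  fin_cases i <;> fin_cases j <;>
    simp [qmat, mul_apply, Fin.sum_univ_two, Complex.ext_iff] <;> constructor <;> ring

theorem star_qmat (a b c d : ℝ) : star (qmat a b c d) = qmat a (-b) (-c) (-d) := by
  ext i j
  fin_cases i <;> fin_cases j <;> simp [qmat]

theorem trace_qmat (a b c d : ℝ) : (qmat a b c d).trace = 2 * a := by
  simp [Matrix.trace_fin_two, qmat]
  ring

theorem det_qmat (a b c d : ℝ) :
    (qmat a b c d).det = ((a ^ 2 + b ^ 2 + c ^ 2 + d ^ 2 : ℝ) : ℂ) := by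
  simp [Matrix.det_fin_two, qmat]
  linear_combination (-(b : ℂ) ^ 2 - (d : ℂ) ^ 2) * Complex.I_sq

theorem qmat_one : qmat 1 0 0 0 = 1 := by
  ext i j
  fin_cases i <;> fin_cases j <;> simp [qmat]

theorem qmat_neg_one : qmat (-1) 0 0 0 = -1 := by
  ext i j
  fin_cases i <;> fin_cases j <;> simp [qmat]

def qmatInt (r : ℝ) (x : ℍ[ℤ]) : Matrix (Fin 2) (Fin 2) ℂ :=
  qmat (r * x.re) (r * x.imI) (r * x.imJ) (r * x.imK)

theorem qmatInt_mul (r s : ℝ) (x y : ℍ[ℤ]) :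
    qmatInt r x * qmatInt s y = qmatInt (r * s) (x * y) := by
  simp only [qmatInt, qmat_mul, qmat_inj, Quaternion.re_mul, Quaternion.imI_mul,
    Quaternion.imJ_mul, Quaternion.imK_mul]
  push_cast
  refine ⟨?_, ?_, ?_, ?_⟩ <;> ring

theorem qmatInt_two_mul (r : ℝ) (x : ℍ[ℤ]) : qmatInt r (2 * x) = qmatInt (r * 2) x := by
  simp only [qmatInt, two_mul, Quaternion.re_add, Quaternion.imI_add, Quaternion.imJ_add,
    Quaternion.imK_add, qmat_inj]
  push_cast
  refine ⟨?_, ?_, ?_, ?_⟩ <;> ring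

theorem qmatInt_mul_of_eq {r s t : ℝ} {x y z : ℍ[ℤ]} (h : x * y = 2 * z)
    (hrst : r * s * 2 = t) : qmatInt r x * qmatInt s y = qmatInt t z := by
  rw [qmatInt_mul, h, qmatInt_two_mul, hrst]

theorem star_qmatInt (r : ℝ) (x : ℍ[ℤ]) : star (qmatInt r x) = qmatInt r (star x) := by
  simp [qmatInt, star_qmat]

theorem trace_qmatInt (r : ℝ) (x : ℍ[ℤ]) :
    (qmatInt r x).trace = ((2 * r * x.re : ℝ) : ℂ) := by
  rw [qmatInt, trace_qmat]
  push_cast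
  ring

theorem qmatInt_half_eq_qmat_iff (x : ℍ[ℤ]) (a b c d : ℝ) :
    qmatInt 2⁻¹ x = qmat a b c d ↔
      (x.re : ℝ) = 2 * a ∧ (x.imI : ℝ) = 2 * b ∧ (x.imJ : ℝ) = 2 * c ∧ (x.imK : ℝ) = 2 * d := by
  simp only [qmatInt, qmat_inj]
  constructor <;> rintro ⟨h1, h2, h3, h4⟩ <;> refine ⟨?_, ?_, ?_, ?_⟩ <;> linarith

end QuaternionMatrices

section BinaryOctahedral

instance : DecidableEq ℍ[ℤ] := fun a b =>
  decidable_of_iff (a.re = b.re ∧ a.imI = b.imI ∧ a.imJ = b.imJ ∧ a.imK = b.imK)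
    QuaternionAlgebra.ext_iff.symm

/-- `2T = {x / 2 | x ∈ twoTInt}`. -/
def twoTInt : List ℍ[ℤ] :=
  [⟨2, 0, 0, 0⟩, ⟨-2, 0, 0, 0⟩, ⟨0, 2, 0, 0⟩, ⟨0, -2, 0, 0⟩, ⟨0, 0, 2, 0⟩, ⟨0, 0, -2, 0⟩,
   ⟨0, 0, 0, 2⟩, ⟨0, 0, 0, -2⟩, ⟨1, 1, 1, 1⟩, ⟨1, 1, 1, -1⟩, ⟨1, 1, -1, 1⟩, ⟨1, 1, -1, -1⟩,
   ⟨1, -1, 1, 1⟩, ⟨1, -1, 1, -1⟩, ⟨1, -1, -1, 1⟩, ⟨1, -1, -1, -1⟩, ⟨-1, 1, 1, 1⟩,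
   ⟨-1, 1, 1, -1⟩, ⟨-1, 1, -1, 1⟩, ⟨-1, 1, -1, -1⟩, ⟨-1, -1, 1, 1⟩, ⟨-1, -1, 1, -1⟩,
   ⟨-1, -1, -1, 1⟩, ⟨-1, -1, -1, -1⟩]

/-- `2O ∖ 2T = {x / √2 | x ∈ twoTSInt}`. -/
def twoTSInt : List ℍ[ℤ] :=
  [⟨1, 1, 0, 0⟩, ⟨1, -1, 0, 0⟩, ⟨-1, 1, 0, 0⟩, ⟨-1, -1, 0, 0⟩, ⟨1, 0, 1, 0⟩, ⟨1, 0, -1, 0⟩,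
   ⟨-1, 0, 1, 0⟩, ⟨-1, 0, -1, 0⟩, ⟨1, 0, 0, 1⟩, ⟨1, 0, 0, -1⟩, ⟨-1, 0, 0, 1⟩, ⟨-1, 0, 0, -1⟩,
   ⟨0, 1, 1, 0⟩, ⟨0, 1, -1, 0⟩, ⟨0, -1, 1, 0⟩, ⟨0, -1, -1, 0⟩, ⟨0, 1, 0, 1⟩, ⟨0, 1, 0, -1⟩,
   ⟨0, -1, 0, 1⟩, ⟨0, -1, 0, -1⟩, ⟨0, 0, 1, 1⟩, ⟨0, 0, 1, -1⟩, ⟨0, 0, -1, 1⟩, ⟨0, 0, -1, -1⟩]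

theorem twoTInt_mul_twoTInt :
    ∀ x ∈ twoTInt, ∀ y ∈ twoTInt, ∃ z ∈ twoTInt, x * y = 2 * z := by
  decide

theorem twoTInt_mul_twoTSInt :
    ∀ x ∈ twoTInt, ∀ y ∈ twoTSInt, ∃ z ∈ twoTSInt, x * y = 2 * z := by
  decide

theorem twoTSInt_mul_twoTInt :
    ∀ x ∈ twoTSInt, ∀ y ∈ twoTInt, ∃ z ∈ twoTSInt, x * y = 2 * z := by
  decide

theorem twoTSInt_mul_twoTSInt : ∀ x ∈ twoTSInt, ∀ y ∈ twoTSInt, x * y ∈ twoTInt := by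
  decide

theorem star_mem_twoTInt : ∀ x ∈ twoTInt, star x ∈ twoTInt := by
  decide

theorem star_mem_twoTSInt : ∀ x ∈ twoTSInt, star x ∈ twoTSInt := by
  decide

/-- Every element of `2T` is a commutator of two elements of `2O ∖ 2T`. -/
theorem exists_commutator_eq :
    ∀ p ∈ twoTInt, ∃ a ∈ twoTSInt, ∃ b ∈ twoTSInt, a * b * star a * star b = 2 * p := by
  decide

theorem re_bounds_twoTInt : ∀ x ∈ twoTInt, -2 ≤ x.re ∧ x.re ≤ 2 := by
  decide

theorem re_bounds_twoTSInt : ∀ x ∈ twoTSInt, -1 ≤ x.re ∧ x.re ≤ 1 := by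
  decide

theorem coord_ne_zero_of_mem_twoTSInt :
    ∀ x ∈ twoTSInt, x.re ≠ 0 ∨ x.imI ≠ 0 ∨ x.imJ ≠ 0 ∨ x.imK ≠ 0 := by
  decide

def twoTS : Set (Matrix (Fin 2) (Fin 2) ℂ) := qmatInt (√2)⁻¹ '' {x | x ∈ twoTSInt}

theorem twoT_eq_image : twoT = qmatInt 2⁻¹ '' {x | x ∈ twoTInt} := by
  ext M
  constructor
  · rintro ((rfl | rfl | rfl | rfl | rfl | rfl | rfl | rfl) | ⟨a, b, c, d, ha, hb, hc, hd, rfl⟩)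
    all_goals try (rcases ha with rfl | rfl <;> rcases hb with rfl | rfl <;>
      rcases hc with rfl | rfl <;> rcases hd with rfl | rfl)
    all_goals
      simp only [Set.mem_image, Set.mem_ofPred_eq, qmatInt_half_eq_qmat_iff]
      norm_num
      norm_cast
  · rintro ⟨x, hx : x ∈ twoTInt, rfl⟩
    fin_cases hx <;> norm_num [twoT, qmatInt, qmat_inj]

theorem one_mem_twoT : (1 : Matrix (Fin 2) (Fin 2) ℂ) ∈ twoT :=
  qmat_one ▸ Or.inl (Set.mem_insert _ _)

theorem neg_one_mem_twoT : (-1 : Matrix (Fin 2) (Fin 2) ℂ) ∈ twoT :=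
  qmat_neg_one ▸ Or.inl (by simp)

theorem qmat_half_mem_twoT : qmat (1 / 2) (1 / 2) (1 / 2) (1 / 2) ∈ twoT :=
  Or.inr ⟨_, _, _, _, Or.inl rfl, Or.inl rfl, Or.inl rfl, Or.inl rfl, rfl⟩

theorem inv_sqrt_two_mul_self : (√2)⁻¹ * (√2)⁻¹ = (2⁻¹ : ℝ) := by
  rw [← mul_inv, Real.mul_self_sqrt zero_le_two]

theorem inv_sqrt_two_mul_ne {m : ℤ} (hm : m ≠ 0) (n : ℤ) : (√2)⁻¹ * m ≠ 2⁻¹ * n := by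
  intro h
  have hn : n ≠ 0 := by
    rintro rfl
    simp [hm] at h
  have key : √2 * n = ((2 * m : ℤ) : ℝ) := by
    field_simp at h
    push_cast
    linarith
  exact (irrational_sqrt_two.mul_intCast hn).ne_int _ key

theorem twoT_mul_twoT {A B : Matrix (Fin 2) (Fin 2) ℂ} (hA : A ∈ twoT) (hB : B ∈ twoT) :
    A * B ∈ twoT := by
  rw [twoT_eq_image] at *
  obtain ⟨x, hx, rfl⟩ := hA
  obtain ⟨y, hy, rfl⟩ := hB
  obtain ⟨z, hz, hxy⟩ := twoTInt_mul_twoTInt x hx y hy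
  exact ⟨z, hz, (qmatInt_mul_of_eq hxy (by norm_num)).symm⟩

theorem twoT_mul_twoTS {A B : Matrix (Fin 2) (Fin 2) ℂ} (hA : A ∈ twoT) (hB : B ∈ twoTS) :
    A * B ∈ twoTS := by
  rw [twoT_eq_image] at hA
  obtain ⟨x, hx, rfl⟩ := hA
  obtain ⟨y, hy, rfl⟩ := hB
  obtain ⟨z, hz, hxy⟩ := twoTInt_mul_twoTSInt x hx y hy
  exact ⟨z, hz, (qmatInt_mul_of_eq hxy (by ring)).symm⟩

theorem twoTS_mul_twoT {A B : Matrix (Fin 2) (Fin 2) ℂ} (hA : A ∈ twoTS) (hB : B ∈ twoT) :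
    A * B ∈ twoTS := by
  rw [twoT_eq_image] at hB
  obtain ⟨x, hx, rfl⟩ := hA
  obtain ⟨y, hy, rfl⟩ := hB
  obtain ⟨z, hz, hxy⟩ := twoTSInt_mul_twoTInt x hx y hy
  exact ⟨z, hz, (qmatInt_mul_of_eq hxy (by ring)).symm⟩

theorem twoTS_mul_twoTS {A B : Matrix (Fin 2) (Fin 2) ℂ} (hA : A ∈ twoTS) (hB : B ∈ twoTS) :
    A * B ∈ twoT := by
  rw [twoT_eq_image]
  obtain ⟨x, hx, rfl⟩ := hA
  obtain ⟨y, hy, rfl⟩ := hB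
  exact ⟨x * y, twoTSInt_mul_twoTSInt x hx y hy, by rw [qmatInt_mul, inv_sqrt_two_mul_self]⟩

theorem star_mem_twoT {A : Matrix (Fin 2) (Fin 2) ℂ} (hA : A ∈ twoT) : star A ∈ twoT := by
  rw [twoT_eq_image] at *
  obtain ⟨x, hx, rfl⟩ := hA
  exact ⟨star x, star_mem_twoTInt x hx, (star_qmatInt _ _).symm⟩

theorem star_mem_twoTS {A : Matrix (Fin 2) (Fin 2) ℂ} (hA : A ∈ twoTS) : star A ∈ twoTS := by
  obtain ⟨x, hx, rfl⟩ := hA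
  exact ⟨star x, star_mem_twoTSInt x hx, (star_qmatInt _ _).symm⟩

theorem notMem_twoT_of_mem_twoTS {A : Matrix (Fin 2) (Fin 2) ℂ} (hA : A ∈ twoTS) :
    A ∉ twoT := by
  rw [twoT_eq_image]
  obtain ⟨x, hx, rfl⟩ := hA
  rintro ⟨y, -, hyx⟩
  simp only [qmatInt, qmat_inj] at hyx
  obtain ⟨h1, h2, h3, h4⟩ := hyx
  rcases coord_ne_zero_of_mem_twoTSInt x hx with h | h | h | h
  · exact inv_sqrt_two_mul_ne h _ h1.symm
  · exact inv_sqrt_two_mul_ne h _ h2.symm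
  · exact inv_sqrt_two_mul_ne h _ h3.symm
  · exact inv_sqrt_two_mul_ne h _ h4.symm

def onePlusI : ℍ[ℤ] := ⟨1, 1, 0, 0⟩

def sMat : Matrix (Fin 2) (Fin 2) ℂ := qmatInt (√2)⁻¹ onePlusI

theorem sMat_mem_twoTS : sMat ∈ twoTS := ⟨onePlusI, by decide, rfl⟩

theorem star_sMat_mul_sMat : star sMat * sMat = 1 := by
  rw [sMat, star_qmatInt, qmatInt_mul, show star onePlusI * onePlusI = 2 * 1 by decide,
    qmatInt_two_mul, inv_sqrt_two_mul_self, ← qmat_one]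
  norm_num [qmatInt]

theorem sMat_mul_star_sMat : sMat * star sMat = 1 :=
  mul_eq_one_comm.mp star_sMat_mul_sMat

theorem trace_sMat : sMat.trace = √2 := by
  rw [sMat, trace_qmatInt, onePlusI, Int.cast_one, mul_one, ← div_eq_mul_inv, Real.div_sqrt]

theorem det_sMat : sMat.det = 1 := by
  rw [sMat, qmatInt, det_qmat, Complex.ofReal_eq_one]
  norm_num [onePlusI, inv_pow]

theorem twoO_eq_union : twoO = twoT ∪ twoTS := by
  have hS : qmat (√2)⁻¹ (√2)⁻¹ 0 0 = sMat := by simp [sMat, qmatInt, onePlusI]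
  rw [twoO, hS]
  congr 1
  ext A
  constructor
  · rintro ⟨B, hB, rfl⟩
    exact twoT_mul_twoTS hB sMat_mem_twoTS
  · intro hA
    refine ⟨A * star sMat, twoTS_mul_twoTS hA (star_mem_twoTS sMat_mem_twoTS), ?_⟩
    beta_reduce
    rw [mul_assoc, star_sMat_mul_sMat, mul_one]

theorem mem_twoO_iff {A : Matrix (Fin 2) (Fin 2) ℂ} : A ∈ twoO ↔ A ∈ twoT ∨ A ∈ twoTS := by
  rw [twoO_eq_union, Set.mem_union]

theorem sMat_mem_twoO : sMat ∈ twoO :=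
  mem_twoO_iff.mpr (Or.inr sMat_mem_twoTS)

open Classical in
/-- The character `χ` of the statement. -/
def chiO (A : Matrix (Fin 2) (Fin 2) ℂ) : ℂ := if A ∈ twoT then 1 else -1

theorem chiO_of_mem_twoT {A : Matrix (Fin 2) (Fin 2) ℂ} (hA : A ∈ twoT) : chiO A = 1 :=
  if_pos hA

theorem chiO_of_mem_twoTS {A : Matrix (Fin 2) (Fin 2) ℂ} (hA : A ∈ twoTS) : chiO A = -1 :=
  if_neg (notMem_twoT_of_mem_twoTS hA)

theorem mul_mem_twoO_and_chiO_mul {A B : Matrix (Fin 2) (Fin 2) ℂ} (hA : A ∈ twoO)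
    (hB : B ∈ twoO) : A * B ∈ twoO ∧ chiO (A * B) = chiO A * chiO B := by
  simp only [mem_twoO_iff] at *
  rcases hA with hA | hA <;> rcases hB with hB | hB
  · simp [twoT_mul_twoT hA hB, chiO_of_mem_twoT, hA, hB]
  · simp [twoT_mul_twoTS hA hB, chiO_of_mem_twoT, chiO_of_mem_twoTS, hA, hB]
  · simp [twoTS_mul_twoT hA hB, chiO_of_mem_twoT, chiO_of_mem_twoTS, hA, hB]
  · simp [twoTS_mul_twoTS hA hB, chiO_of_mem_twoT, chiO_of_mem_twoTS, hA, hB]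

theorem star_mem_twoO_and_chiO_star {A : Matrix (Fin 2) (Fin 2) ℂ} (hA : A ∈ twoO) :
    star A ∈ twoO ∧ chiO (star A) = chiO A := by
  simp only [mem_twoO_iff] at *
  rcases hA with hA | hA
  · simp [star_mem_twoT hA, chiO_of_mem_twoT, hA]
  · simp [star_mem_twoTS hA, chiO_of_mem_twoTS, hA]

end BinaryOctahedral

section UnitCircle

theorem re_sq_of_norm_eq_one {w : ℂ} (hw : ‖w‖ = 1) : (w ^ 2).re = 2 * w.re ^ 2 - 1 := by
  have h := Complex.normSq_eq_norm_sq w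
  rw [hw, Complex.normSq_apply] at h
  rw [sq, Complex.mul_re]
  linarith

theorem sq_sub_two_re_mul_add_one {w : ℂ} (hw : ‖w‖ = 1) :
    w ^ 2 - ((2 * w.re : ℝ) : ℂ) * w + 1 = 0 := by
  have h1 : w * (starRingEnd ℂ) w = 1 := by rw [Complex.mul_conj', hw]; simp
  linear_combination w * Complex.add_conj w - h1

theorem abs_re_le_one {w : ℂ} (hw : ‖w‖ = 1) : |w.re| ≤ 1 :=
  hw ▸ Complex.abs_re_le_norm w

/-- `w` is a root of `X² - mX + 1` with `|m| ≤ 2`. -/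
theorem pow_twelve_eq_one_of_two_re_eq_int {w : ℂ} (hw : ‖w‖ = 1) {m : ℤ}
    (hm : 2 * w.re = m) : w ^ 12 = 1 := by
  have hq := sq_sub_two_re_mul_add_one hw
  rw [hm] at hq
  have hre := abs_le.mp (abs_re_le_one hw)
  have hlo : -2 ≤ m := by exact_mod_cast (show (-2 : ℝ) ≤ m by linarith)
  have hhi : m ≤ 2 := by exact_mod_cast (show (m : ℝ) ≤ 2 by linarith)
  interval_cases m <;> push_cast at hq
  · have h : (w + 1) ^ 2 = 0 := by linear_combination hq
    rw [eq_neg_of_add_eq_zero_left (pow_eq_zero_iff two_ne_zero |>.mp h)]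
    norm_num
  · linear_combination (w - 1) * (w ^ 9 + w ^ 6 + w ^ 3 + 1) * hq
  · linear_combination (w ^ 10 - w ^ 8 + w ^ 6 - w ^ 4 + w ^ 2 - 1) * hq
  · linear_combination (w + 1) * (w ^ 9 - w ^ 6 + w ^ 3 - 1) * hq
  · have h : (w - 1) ^ 2 = 0 := by linear_combination hq
    rw [sub_eq_zero.mp (pow_eq_zero_iff two_ne_zero |>.mp h)]
    norm_num

/-- With `c = 2 Re w`, the hypotheses say `√2 c ∈ ℤ` and `c² - 2 ∈ ℤ`; with `|c| ≤ 2` this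
forces `c² - 2 = 2 Re (w²) ∈ {-2, 0}`. -/
theorem pow_eight_eq_one_of_re_eq_int {w : ℂ} (hw : ‖w‖ = 1) {m d : ℤ}
    (hm : √2 * (2 * w.re) = m) (hd : 2 * (w ^ 2).re = d) : w ^ 8 = 1 := by
  have hmd : m ^ 2 = 2 * d + 4 := by
    have : (m : ℝ) ^ 2 = 2 * d + 4 := by
      rw [← hm, ← hd, re_sq_of_norm_eq_one hw, mul_pow, Real.sq_sqrt zero_le_two]
      ring
    exact_mod_cast this
  have hm8 : m ^ 2 ≤ 8 := by
    have hre := abs_le.mp (abs_re_le_one hw)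
    have : (m : ℝ) ^ 2 ≤ 8 := by
      rw [← hm, mul_pow, Real.sq_sqrt zero_le_two]
      nlinarith
    exact_mod_cast this
  have hd' : d = -2 ∨ d = 0 := by
    have hlo : -2 ≤ m := by nlinarith
    have hhi : m ≤ 2 := by nlinarith
    interval_cases m <;> omega
  have hq := sq_sub_two_re_mul_add_one (w := w ^ 2) (by rw [norm_pow, hw, one_pow])
  rw [hd] at hq
  rcases hd' with rfl | rfl <;> push_cast at hq
  · have h : (w ^ 2 + 1) ^ 2 = 0 := by linear_combination hq
    linear_combination (w ^ 6 - w ^ 4 + w ^ 2 - 1) * (pow_eq_zero_iff two_ne_zero |>.mp h)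
  · linear_combination (w ^ 4 - 1) * hq

theorem re_of_pow_four_eq_one {w : ℂ} (hw : w ^ 4 = 1) : w.re = 0 ∨ w.re = 1 ∨ w.re = -1 := by
  have h : (w - 1) * (w + 1) * (w - Complex.I) * (w + Complex.I) = 0 := by
    linear_combination hw - (w ^ 2 - 1) * Complex.I_sq
  rcases mul_eq_zero.mp h with h | h
  · rcases mul_eq_zero.mp h with h | h
    · rcases mul_eq_zero.mp h with h | h
      · exact Or.inr (Or.inl (by rw [sub_eq_zero.mp h, Complex.one_re]))
      · exact Or.inr (Or.inr (by simp [eq_neg_of_add_eq_zero_left h]))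
    · exact Or.inl (by rw [sub_eq_zero.mp h, Complex.I_re])
  · exact Or.inl (by simp [eq_neg_of_add_eq_zero_left h])

theorem re_sq_of_pow_four_eq_neg_one {w : ℂ} (hw1 : ‖w‖ = 1) (hw : w ^ 4 = -1) :
    w.re ^ 2 = 1 / 2 := by
  have h : (w ^ 2 - Complex.I) * (w ^ 2 + Complex.I) = 0 := by
    linear_combination hw - Complex.I_sq
  have hre : (w ^ 2).re = 0 := by
    rcases mul_eq_zero.mp h with h | h
    · rw [sub_eq_zero.mp h, Complex.I_re]
    · simp [eq_neg_of_add_eq_zero_left h]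
  linarith [re_sq_of_norm_eq_one hw1]

end UnitCircle

section RootsOfUnity

theorem eQ_add (a b : ℚ) : eQ (a + b) = eQ a * eQ b := by
  rw [eQ, eQ, eQ, ← Complex.exp_add]
  push_cast
  ring_nf

theorem eQ_nat_mul (n : ℕ) (a : ℚ) : eQ (n * a) = eQ a ^ n := by
  rw [eQ, eQ, ← Complex.exp_nat_mul]
  push_cast
  ring_nf

theorem eQ_one : eQ 1 = 1 := by
  rw [eQ, Rat.cast_one, mul_one, Complex.exp_two_pi_mul_I]

theorem eQ_half : eQ (1 / 2) = -1 := by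
  rw [eQ, ← Complex.exp_pi_mul_I]
  push_cast
  ring_nf

theorem eQ_quarter : eQ (1 / 4) = Complex.I := by
  rw [eQ]
  conv_rhs => rw [← Complex.exp_pi_div_two_mul_I]
  push_cast
  ring_nf

theorem norm_eQ (a : ℚ) : ‖eQ a‖ = 1 := by
  rw [eQ, show 2 * (Real.pi : ℂ) * Complex.I * (a : ℂ) = ((2 * Real.pi * a : ℝ) : ℂ) * Complex.I
    by push_cast; ring]
  exact Complex.norm_exp_ofReal_mul_I _

theorem isPrimitiveRoot_eQ_sixth : IsPrimitiveRoot (eQ (1 / 6)) 6 := by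
  convert Complex.isPrimitiveRoot_exp 6 (by norm_num) using 1
  rw [eQ]
  push_cast
  ring_nf

theorem mem_of_pow_six_eq_one {C : Submonoid ℂ} (hneg : -1 ∈ C) (hζ : eQ (1 / 3) ∈ C) {u : ℂ}
    (hu : u ^ 6 = 1) : u ∈ C := by
  have hζ6 : eQ (1 / 6) = -1 * eQ (1 / 3) ^ 2 := by
    rw [← eQ_half, ← eQ_nat_mul, ← eQ_add, ← mul_one (eQ (1 / 6)), ← eQ_one, ← eQ_add]
    norm_num
  obtain ⟨i, -, rfl⟩ := isPrimitiveRoot_eQ_sixth.eq_pow_of_pow_eq_one hu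
  rw [hζ6]
  exact pow_mem (mul_mem hneg (pow_mem hζ 2)) i

theorem mem_of_pow_twelve_eq_one {C : Submonoid ℂ} (h6 : ∀ u : ℂ, u ^ 6 = 1 → u ∈ C) {v : ℂ}
    (hv : v ∈ C) (hv6 : v ^ 6 = -1) {u : ℂ} (hu : u ^ 12 = 1) : u ∈ C := by
  have hv0 : v ≠ 0 := by
    rintro rfl
    norm_num at hv6
  rcases mul_eq_zero.mp (by linear_combination hu : (u ^ 6 - 1) * (u ^ 6 + 1) = 0) with h | h
  · exact h6 u (sub_eq_zero.mp h)
  · have h' : (u / v) ^ 6 = 1 := by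
      rw [div_pow, hv6, eq_neg_of_add_eq_zero_left h, neg_div_neg_eq, div_one]
    simpa [div_mul_cancel₀ u hv0] using mul_mem (h6 _ h') hv

end RootsOfUnity

section BlockMatrices

theorem su3block_mul (u v : ℂ) (A B : Matrix (Fin 2) (Fin 2) ℂ) :
    su3block u A * su3block v B = su3block (u * v) (A * B) := by
  ext i j
  fin_cases i <;> fin_cases j <;>
    simp [su3block, Matrix.mul_apply, Fin.sum_univ_three, Fin.sum_univ_two] <;> ring

theorem star_su3block (u : ℂ) (A : Matrix (Fin 2) (Fin 2) ℂ) :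
    star (su3block u A) = su3block (starRingEnd ℂ u) (star A) := by
  ext i j
  fin_cases i <;> fin_cases j <;> simp [su3block]

theorem su3block_one : su3block 1 1 = 1 := by
  ext i j
  fin_cases i <;> fin_cases j <;> simp [su3block]

theorem trace_su3block (u : ℂ) (A : Matrix (Fin 2) (Fin 2) ℂ) :
    (su3block u A).trace = u ^ 2 + u⁻¹ * A.trace := by
  simp [Matrix.trace_fin_three, su3block, Matrix.trace_fin_two]
  ring

theorem det_su3block {u : ℂ} (hu : u ≠ 0) (A : Matrix (Fin 2) (Fin 2) ℂ) :
    (su3block u A).det = A.det := by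
  simp [Matrix.det_fin_three, su3block, Matrix.det_fin_two]
  field_simp

theorem norm_sq_trace_su3block {u : ℂ} (hu : ‖u‖ = 1) {A : Matrix (Fin 2) (Fin 2) ℂ} {t : ℝ}
    (ht : A.trace = t) : ‖(su3block u A).trace‖ ^ 2 = 1 + t ^ 2 + 2 * t * (u ^ 3).re := by
  have hu0 : u ≠ 0 := norm_ne_zero_iff.mp (by rw [hu]; exact one_ne_zero)
  have hconj : starRingEnd ℂ u = u⁻¹ := (Complex.inv_eq_conj hu).symm
  apply Complex.ofReal_injective
  rw [trace_su3block, ht, Complex.ofReal_pow, ← Complex.mul_conj', map_add, map_mul, map_pow,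
    map_inv₀, Complex.conj_ofReal, hconj, inv_inv]
  push_cast
  rw [Complex.re_eq_add_conj, map_pow, hconj]
  field_simp
  ring

theorem su3block_mem_unitaryGroup {u : ℂ} (hu : ‖u‖ = 1) {A : Matrix (Fin 2) (Fin 2) ℂ}
    (hA : A ∈ unitaryGroup (Fin 2) ℂ) : su3block u A ∈ unitaryGroup (Fin 3) ℂ := by
  have hconj : u * starRingEnd ℂ u = 1 := by rw [Complex.mul_conj', hu]; simp
  rw [mem_unitaryGroup_iff, star_su3block, su3block_mul, hconj, mem_unitaryGroup_iff.mp hA,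
    su3block_one]

theorem exists_m3_eq_su3block {u : ℂ} (hu : ‖u‖ = 1) {A : Matrix (Fin 2) (Fin 2) ℂ}
    (hA : A ∈ unitaryGroup (Fin 2) ℂ) (hdet : A.det = 1) : ∃ x : G3, m3 x = su3block u A := by
  have hu0 : u ≠ 0 := norm_ne_zero_iff.mp (by rw [hu]; exact one_ne_zero)
  refine ⟨⟨⟨su3block u A, su3block_mem_unitaryGroup hu hA⟩, ?_⟩, rfl⟩
  change (su3block u A).det = 1
  rw [det_su3block hu0, hdet]

end BlockMatrices

section MatrixCoercions

theorem m2_injective : Function.Injective m2 := fun _ _ h => Subtype.ext (Subtype.ext h)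

theorem m2_mul (x y : G2) : m2 (x * y) = m2 x * m2 y := rfl

theorem m2_inv (x : G2) : m2 x⁻¹ = star (m2 x) := rfl

theorem m3_injective : Function.Injective m3 := fun _ _ h => Subtype.ext (Subtype.ext h)

theorem m3_mul (x y : G3) : m3 (x * y) = m3 x * m3 y := rfl

theorem m3_inv (x : G3) : m3 x⁻¹ = star (m3 x) := rfl

theorem m3_one : m3 1 = 1 := rfl

theorem trace_m3_conj (g x : G3) : (m3 (g * x * g⁻¹)).trace = (m3 x).trace := by
  rw [m3_mul, m3_mul, Matrix.trace_mul_cycle, ← m3_mul, inv_mul_cancel, m3_one, one_mul]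

theorem sgOf_image_m3 (H : Subgroup G3) : sgOf (m3 '' H) = H := by
  have h : {x : G3 | m3 x ∈ m3 '' H} = H := Set.ext fun _ => m3_injective.mem_set_image
  rw [sgOf, h, Subgroup.closure_eq]

end MatrixCoercions

section BO

theorem mem_BO_iff {m : ℕ} {M : Matrix (Fin 3) (Fin 3) ℂ} :
    M ∈ BO m ↔ ∃ u : ℂ, ∃ A ∈ twoO, u ^ m = chiO A ∧ M = su3block u A := by
  constructor
  · rintro ⟨u, -, A, hA, hsign, rfl⟩
    refine ⟨u, A, hA, ?_, rfl⟩
    rcases hsign with ⟨hT, hu⟩ | ⟨hT, hu⟩ <;> simp [chiO, hT, hu]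
  · rintro ⟨u, A, hA, hu, rfl⟩
    refine ⟨u, ?_, A, hA, ?_, rfl⟩
    · rw [pow_mul', hu, chiO]
      split_ifs <;> norm_num
    · rw [chiO] at hu
      split_ifs at hu with hT
      exacts [Or.inl ⟨hT, hu⟩, Or.inr ⟨hT, hu⟩]

theorem su3block_mem_BO {m : ℕ} {u : ℂ} {A : Matrix (Fin 2) (Fin 2) ℂ} (hA : A ∈ twoO)
    (hu : u ^ m = chiO A) : su3block u A ∈ BO m :=
  mem_BO_iff.mpr ⟨u, A, hA, hu, rfl⟩

theorem mul_mem_BO {m : ℕ} {M N : Matrix (Fin 3) (Fin 3) ℂ} (hM : M ∈ BO m) (hN : N ∈ BO m) :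
    M * N ∈ BO m := by
  obtain ⟨u, A, hA, hu, rfl⟩ := mem_BO_iff.mp hM
  obtain ⟨v, B, hB, hv, rfl⟩ := mem_BO_iff.mp hN
  obtain ⟨hAB, hχ⟩ := mul_mem_twoO_and_chiO_mul hA hB
  rw [su3block_mul]
  exact su3block_mem_BO hAB (by rw [mul_pow, hu, hv, hχ])

theorem star_mem_BO {m : ℕ} {M : Matrix (Fin 3) (Fin 3) ℂ} (hM : M ∈ BO m) : star M ∈ BO m := by
  obtain ⟨u, A, hA, hu, rfl⟩ := mem_BO_iff.mp hM
  obtain ⟨hA', hχ⟩ := star_mem_twoO_and_chiO_star hA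
  rw [star_su3block]
  refine su3block_mem_BO hA' ?_
  rw [← map_pow, hu, hχ, chiO]
  split_ifs <;> simp

theorem m3_mem_BO_of_mem_sgOf {m : ℕ} {x : G3} (hx : x ∈ sgOf (BO m)) : m3 x ∈ BO m := by
  induction hx using Subgroup.closure_induction with
  | mem y hy => exact hy
  | one =>
    rw [m3_one, ← su3block_one]
    exact su3block_mem_BO (Or.inl one_mem_twoT) (by rw [one_pow, chiO_of_mem_twoT one_mem_twoT])
  | mul a b _ _ ha hb => exact mul_mem_BO ha hb
  | inv a _ ha => rw [m3_inv]; exact star_mem_BO ha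

end BO

section Lift

/-- `C = {u | (u, 1) ∈ H̃}`, as a submonoid of `ℂ`. -/
def scalarPart (Ht : Subgroup (unitary ℂ × G2)) : Submonoid ℂ :=
  (Ht.comap (MonoidHom.inl (unitary ℂ) G2)).toSubmonoid.map (unitary ℂ).subtype

variable {Ht : Subgroup (unitary ℂ × G2)}

theorem mem_scalarPart {z : ℂ} :
    z ∈ scalarPart Ht ↔ ∃ u : unitary ℂ, (u, 1) ∈ Ht ∧ (u : ℂ) = z := by
  simp [scalarPart]

theorem norm_of_mem_scalarPart {z : ℂ} (hz : z ∈ scalarPart Ht) : ‖z‖ = 1 := by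
  obtain ⟨u, -, rfl⟩ := mem_scalarPart.mp hz
  exact CStarRing.norm_coe_unitary u

theorem exists_mem_snd_eq (hproj : (fun p : unitary ℂ × G2 => m2 p.2) '' (Ht : Set _) = twoO)
    {A : Matrix (Fin 2) (Fin 2) ℂ} (hA : A ∈ twoO) : ∃ x ∈ Ht, m2 x.2 = A := by
  rw [← hproj] at hA
  exact hA

theorem exists_one_mem_of_mem_twoT
    (hproj : (fun p : unitary ℂ × G2 => m2 p.2) '' (Ht : Set _) = twoO)
    {A : Matrix (Fin 2) (Fin 2) ℂ} (hA : A ∈ twoT) : ∃ g : G2, (1, g) ∈ Ht ∧ m2 g = A := by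
  rw [twoT_eq_image] at hA
  obtain ⟨p, hp, rfl⟩ := hA
  obtain ⟨a, ha, b, hb, hab⟩ := exists_commutator_eq p hp
  obtain ⟨x, hx, hxa⟩ := exists_mem_snd_eq hproj (mem_twoO_iff.mpr (Or.inr ⟨a, ha, rfl⟩))
  obtain ⟨y, hy, hyb⟩ := exists_mem_snd_eq hproj (mem_twoO_iff.mpr (Or.inr ⟨b, hb, rfl⟩))
  have hcomm : ((1 : unitary ℂ), (x * y * x⁻¹ * y⁻¹).2) = x * y * x⁻¹ * y⁻¹ := by
    refine Prod.ext ?_ rfl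
    simp only [Prod.fst_mul, Prod.fst_inv]
    rw [mul_comm x.1 y.1, mul_inv_cancel_right, mul_inv_cancel]
  refine ⟨(x * y * x⁻¹ * y⁻¹).2,
    hcomm ▸ mul_mem (mul_mem (mul_mem hx hy) (inv_mem hx)) (inv_mem hy), ?_⟩
  simp only [Prod.snd_mul, Prod.snd_inv, m2_mul, m2_inv, hxa, hyb, star_qmatInt, qmatInt_mul, hab,
    qmatInt_two_mul]
  congr 1
  rw [show (√2)⁻¹ * (√2)⁻¹ * (√2)⁻¹ * (√2)⁻¹ = ((√2)⁻¹ * (√2)⁻¹) * ((√2)⁻¹ * (√2)⁻¹) by ring,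
    inv_sqrt_two_mul_self]
  norm_num

theorem exists_mem_of_mem_scalarPart
    (hproj : (fun p : unitary ℂ × G2 => m2 p.2) '' (Ht : Set _) = twoO)
    {u : ℂ} (hu : u ∈ scalarPart Ht) {A : Matrix (Fin 2) (Fin 2) ℂ} (hA : A ∈ twoT) :
    ∃ x ∈ Ht, (x.1 : ℂ) = u ∧ m2 x.2 = A := by
  obtain ⟨v, hv, rfl⟩ := mem_scalarPart.mp hu
  obtain ⟨g, hg, rfl⟩ := exists_one_mem_of_mem_twoT hproj hA
  exact ⟨(v, 1) * (1, g), mul_mem hv hg, by simp, by simp⟩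

theorem fst_mem_scalarPart (hproj : (fun p : unitary ℂ × G2 => m2 p.2) '' (Ht : Set _) = twoO)
    {x : unitary ℂ × G2} (hx : x ∈ Ht) (hA : m2 x.2 ∈ twoT) : (x.1 : ℂ) ∈ scalarPart Ht := by
  obtain ⟨g, hg, hgx⟩ := exists_one_mem_of_mem_twoT hproj hA
  have h : (x.1, (1 : G2)) = x * (1, g)⁻¹ := by
    ext1
    · simp
    · simp [m2_injective hgx]
  exact mem_scalarPart.mpr ⟨x.1, h ▸ mul_mem hx (inv_mem hg), rfl⟩

theorem mem_scalarPart_of_pow_six_eq_one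
    (hproj : (fun p : unitary ℂ × G2 => m2 p.2) '' (Ht : Set _) = twoO)
    (hneg : ∃ x ∈ Ht, (x.1 : ℂ) = -1 ∧ m2 x.2 = -1)
    (hzeta : ∃ x ∈ Ht, (x.1 : ℂ) = eQ (1 / 3) ∧ m2 x.2 = 1) {u : ℂ} (hu : u ^ 6 = 1) :
    u ∈ scalarPart Ht := by
  obtain ⟨x, hx, hx1, hx2⟩ := hneg
  obtain ⟨y, hy, hy1, hy2⟩ := hzeta
  refine mem_of_pow_six_eq_one ?_ ?_ hu
  · exact hx1 ▸ fst_mem_scalarPart hproj hx (hx2 ▸ neg_one_mem_twoT)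
  · exact hy1 ▸ fst_mem_scalarPart hproj hy (hy2 ▸ one_mem_twoT)

theorem sq_fst_mem_scalarPart (hproj : (fun p : unitary ℂ × G2 => m2 p.2) '' (Ht : Set _) = twoO)
    {xS : unitary ℂ × G2} (hxS : xS ∈ Ht) (hS : m2 xS.2 = sMat) :
    (xS.1 : ℂ) ^ 2 ∈ scalarPart Ht := by
  rw [sq]
  exact fst_mem_scalarPart hproj (mul_mem hxS hxS)
    (by rw [Prod.snd_mul, m2_mul, hS]; exact twoTS_mul_twoTS sMat_mem_twoTS sMat_mem_twoTS)

end Lift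

section Rationality

variable {Ht : Subgroup (unitary ℂ × G2)}

theorem exists_int_of_mem_of_mem_scalarPart
    (hrat : ∀ x ∈ Ht, ∃ k : ℤ, ‖(piMat x).trace‖ ^ 2 = k) {x : unitary ℂ × G2} (hx : x ∈ Ht)
    {u : ℂ} (hu : u ∈ scalarPart Ht) {t : ℝ} (ht : (m2 x.2).trace = t) :
    ∃ k : ℤ, 1 + t ^ 2 + 2 * t * (((x.1 : ℂ) * u) ^ 3).re = k := by
  obtain ⟨v, hv, rfl⟩ := mem_scalarPart.mp hu
  obtain ⟨k, hk⟩ := hrat _ (mul_mem hx hv)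
  refine ⟨k, ?_⟩
  rw [← hk, piMat, norm_sq_trace_su3block (CStarRing.norm_coe_unitary _) (by simpa using ht)]
  rfl

theorem exists_int_two_re_pow_three
    (hproj : (fun p : unitary ℂ × G2 => m2 p.2) '' (Ht : Set _) = twoO)
    (hrat : ∀ x ∈ Ht, ∃ k : ℤ, ‖(piMat x).trace‖ ^ 2 = k) {v : ℂ} (hv : v ∈ scalarPart Ht) :
    ∃ m : ℤ, 2 * (v ^ 3).re = m := by
  obtain ⟨x, hx, hx1, hx2⟩ := exists_mem_of_mem_scalarPart hproj (one_mem _) qmat_half_mem_twoT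
  obtain ⟨k, hk⟩ := exists_int_of_mem_of_mem_scalarPart hrat hx hv (t := 1)
    (by rw [hx2, trace_qmat]; norm_num)
  refine ⟨k - 2, ?_⟩
  rw [hx1, one_mul] at hk
  push_cast
  linarith

theorem mul_pow_twenty_four_eq_one
    (hproj : (fun p : unitary ℂ × G2 => m2 p.2) '' (Ht : Set _) = twoO)
    (hrat : ∀ x ∈ Ht, ∃ k : ℤ, ‖(piMat x).trace‖ ^ 2 = k) {xS : unitary ℂ × G2} (hxS : xS ∈ Ht)
    (hS : m2 xS.2 = sMat) {v : ℂ} (hv : v ∈ scalarPart Ht) : ((xS.1 : ℂ) * v) ^ 24 = 1 := by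
  obtain ⟨k, hk⟩ := exists_int_of_mem_of_mem_scalarPart hrat hxS hv (by rw [hS, trace_sMat])
  obtain ⟨d, hd⟩ := exists_int_two_re_pow_three hproj hrat
    (mul_mem (sq_fst_mem_scalarPart hproj hxS hS) (pow_mem hv 2))
  rw [show 24 = 3 * 8 from rfl, pow_mul]
  refine pow_eight_eq_one_of_re_eq_int (m := k - 3) (d := d) ?_ ?_ ?_
  · rw [norm_pow, norm_mul, CStarRing.norm_coe_unitary, norm_of_mem_scalarPart hv, one_mul,
      one_pow]
  · rw [Real.sq_sqrt zero_le_two] at hk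
    push_cast
    linarith
  · rw [← hd]
    ring_nf

theorem pow_twelve_eq_one_of_mem_scalarPart
    (hproj : (fun p : unitary ℂ × G2 => m2 p.2) '' (Ht : Set _) = twoO)
    (hrat : ∀ x ∈ Ht, ∃ k : ℤ, ‖(piMat x).trace‖ ^ 2 = k) {u : ℂ} (hu : u ∈ scalarPart Ht) :
    u ^ 12 = 1 := by
  obtain ⟨xS, hxS, hS⟩ := exists_mem_snd_eq hproj sMat_mem_twoO
  have hs24 : (xS.1 : ℂ) ^ 24 = 1 := by
    simpa using mul_pow_twenty_four_eq_one hproj hrat hxS hS (one_mem _)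
  have hu24 : u ^ 24 = 1 := by
    simpa [mul_pow, hs24] using mul_pow_twenty_four_eq_one hproj hrat hxS hS hu
  obtain ⟨m, hm⟩ := exists_int_two_re_pow_three hproj hrat hu
  have hu36 : u ^ 36 = 1 := by
    rw [show 36 = 3 * 12 from rfl, pow_mul]
    exact pow_twelve_eq_one_of_two_re_eq_int
      (by rw [norm_pow, norm_of_mem_scalarPart hu, one_pow]) hm
  linear_combination hu36 - u ^ 12 * hu24

theorem scalarPart_eq_six_or_twelve
    (hproj : (fun p : unitary ℂ × G2 => m2 p.2) '' (Ht : Set _) = twoO)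
    (hneg : ∃ x ∈ Ht, (x.1 : ℂ) = -1 ∧ m2 x.2 = -1)
    (hzeta : ∃ x ∈ Ht, (x.1 : ℂ) = eQ (1 / 3) ∧ m2 x.2 = 1)
    (hrat : ∀ x ∈ Ht, ∃ k : ℤ, ‖(piMat x).trace‖ ^ 2 = k) :
    (∀ u, u ∈ scalarPart Ht ↔ u ^ 6 = 1) ∨ (∀ u, u ∈ scalarPart Ht ↔ u ^ 12 = 1) := by
  have h6 := fun u => mem_scalarPart_of_pow_six_eq_one hproj hneg hzeta (u := u)
  have h12 := fun u => pow_twelve_eq_one_of_mem_scalarPart hproj hrat (u := u)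
  by_cases h : ∀ u ∈ scalarPart Ht, u ^ 6 = 1
  · exact Or.inl fun u => ⟨h u, h6 u⟩
  · obtain ⟨v, hv, hv6⟩ := not_forall₂.mp h
    have hv6' : v ^ 6 = -1 := by
      have : v ^ 6 * v ^ 6 = 1 := by rw [← pow_add]; exact h12 v hv
      exact (mul_self_eq_one_iff.mp this).resolve_left hv6
    exact Or.inr fun u => ⟨h12 u, mem_of_pow_twelve_eq_one h6 hv hv6'⟩

/-- Otherwise `(1, S) ∈ H̃`, and `|Tr π(1, S)|² = 3 + 2√2` is irrational. -/
theorem fst_pow_eq_neg_one_of_snd_eq_sMat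
    (hproj : (fun p : unitary ℂ × G2 => m2 p.2) '' (Ht : Set _) = twoO)
    (hrat : ∀ x ∈ Ht, ∃ k : ℤ, ‖(piMat x).trace‖ ^ 2 = k) {m : ℕ}
    (hC : ∀ u, u ∈ scalarPart Ht ↔ u ^ m = 1) {xS : unitary ℂ × G2} (hxS : xS ∈ Ht)
    (hS : m2 xS.2 = sMat) : (xS.1 : ℂ) ^ m = -1 := by
  have hs2 := (hC _).mp (sq_fst_mem_scalarPart hproj hxS hS)
  rw [← pow_mul, mul_comm, pow_mul, sq] at hs2
  refine (mul_self_eq_one_iff.mp hs2).resolve_left fun hs => ?_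
  have hs0 : (xS.1 : ℂ) ≠ 0 := by
    rw [← norm_ne_zero_iff, CStarRing.norm_coe_unitary]; exact one_ne_zero
  obtain ⟨k, hk⟩ := exists_int_of_mem_of_mem_scalarPart hrat hxS
    ((hC _).mpr (by rw [inv_pow, hs, inv_one])) (by rw [hS, trace_sMat])
  rw [mul_inv_cancel₀ hs0, one_pow, Complex.one_re, Real.sq_sqrt zero_le_two] at hk
  refine (irrational_sqrt_two.mul_intCast (m := 2) two_ne_zero).ne_int (k - 3) ?_
  push_cast
  linarith

end Rationality

section Image

variable {Ht : Subgroup (unitary ℂ × G2)}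

theorem fst_pow_eq_chiO (hproj : (fun p : unitary ℂ × G2 => m2 p.2) '' (Ht : Set _) = twoO)
    {m : ℕ} (hC : ∀ u, u ∈ scalarPart Ht ↔ u ^ m = 1) {xS : unitary ℂ × G2} (hxS : xS ∈ Ht)
    (hS : m2 xS.2 = sMat) (hs : (xS.1 : ℂ) ^ m = -1) {x : unitary ℂ × G2} (hx : x ∈ Ht) :
    (x.1 : ℂ) ^ m = chiO (m2 x.2) := by
  have hA : m2 x.2 ∈ twoO := by rw [← hproj]; exact ⟨x, hx, rfl⟩
  rcases mem_twoO_iff.mp hA with hT | hTS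
  · rw [chiO_of_mem_twoT hT]
    exact (hC _).mp (fst_mem_scalarPart hproj hx hT)
  · rw [chiO_of_mem_twoTS hTS]
    have hy : m2 (x * xS⁻¹).2 ∈ twoT := by
      rw [Prod.snd_mul, Prod.snd_inv, m2_mul, m2_inv, hS]
      exact twoTS_mul_twoTS hTS (star_mem_twoTS sMat_mem_twoTS)
    have hyC := (hC _).mp (fst_mem_scalarPart hproj (mul_mem hx (inv_mem hxS)) hy)
    have hxy : (x.1 : ℂ) = ((x * xS⁻¹).1 : ℂ) * xS.1 :=
      congrArg Subtype.val (inv_mul_cancel_right x.1 xS.1).symm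
    rw [hxy, mul_pow, hyC, hs, one_mul]

theorem exists_mem_of_pow_eq_chiO
    (hproj : (fun p : unitary ℂ × G2 => m2 p.2) '' (Ht : Set _) = twoO)
    {m : ℕ} (hC : ∀ u, u ∈ scalarPart Ht ↔ u ^ m = 1) {xS : unitary ℂ × G2} (hxS : xS ∈ Ht)
    (hS : m2 xS.2 = sMat) (hs : (xS.1 : ℂ) ^ m = -1) {u : ℂ} {A : Matrix (Fin 2) (Fin 2) ℂ}
    (hA : A ∈ twoO) (hu : u ^ m = chiO A) : ∃ x ∈ Ht, (x.1 : ℂ) = u ∧ m2 x.2 = A := by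
  rcases mem_twoO_iff.mp hA with hT | hTS
  · rw [chiO_of_mem_twoT hT] at hu
    exact exists_mem_of_mem_scalarPart hproj ((hC u).mpr hu) hT
  · rw [chiO_of_mem_twoTS hTS] at hu
    have hs0 : (xS.1 : ℂ) ≠ 0 := by
      rw [← norm_ne_zero_iff, CStarRing.norm_coe_unitary]; exact one_ne_zero
    obtain ⟨y, hy, hy1, hy2⟩ := exists_mem_of_mem_scalarPart hproj
      ((hC (u / xS.1)).mpr (by rw [div_pow, hu, hs, neg_div_neg_eq, div_one]))
      (twoTS_mul_twoTS (star_mem_twoTS sMat_mem_twoTS) hTS)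
    refine ⟨xS * y, mul_mem hxS hy, ?_, ?_⟩
    · change (xS.1 : ℂ) * y.1 = u
      rw [hy1, mul_div_cancel₀ _ hs0]
    · rw [Prod.snd_mul, m2_mul, hS, hy2, ← mul_assoc, sMat_mul_star_sMat, one_mul]

theorem image_piMat_eq_BO (hproj : (fun p : unitary ℂ × G2 => m2 p.2) '' (Ht : Set _) = twoO)
    {m : ℕ} (hC : ∀ u, u ∈ scalarPart Ht ↔ u ^ m = 1) {xS : unitary ℂ × G2} (hxS : xS ∈ Ht)
    (hS : m2 xS.2 = sMat) (hs : (xS.1 : ℂ) ^ m = -1) : piMat '' Ht = BO m := by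
  ext M
  rw [mem_BO_iff]
  constructor
  · rintro ⟨x, hx, rfl⟩
    have hA : m2 x.2 ∈ twoO := by rw [← hproj]; exact ⟨x, hx, rfl⟩
    exact ⟨x.1, m2 x.2, hA, fst_pow_eq_chiO hproj hC hxS hS hs hx, rfl⟩
  · rintro ⟨u, A, hA, hu, rfl⟩
    obtain ⟨x, hx, rfl, rfl⟩ := exists_mem_of_pow_eq_chiO hproj hC hxS hS hs hA hu
    exact ⟨x, hx, rfl⟩

end Image

section NonConjugacy

theorem norm_sq_trace_ne_three_of_mem_BO12 {M : Matrix (Fin 3) (Fin 3) ℂ} (hM : M ∈ BO 12) :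
    ‖M.trace‖ ^ 2 ≠ 3 := by
  obtain ⟨u, A, hA, hu, rfl⟩ := mem_BO_iff.mp hM
  have hu1 : ‖u‖ = 1 := by
    refine Complex.norm_eq_one_of_pow_eq_one (n := 24) ?_ (by norm_num)
    rw [show 24 = 12 * 2 from rfl, pow_mul, hu, chiO]
    split_ifs <;> norm_num
  have hw1 : ‖u ^ 3‖ = 1 := by rw [norm_pow, hu1, one_pow]
  rw [show 12 = 3 * 4 from rfl, pow_mul] at hu
  rcases mem_twoO_iff.mp hA with hT | hTS
  · rw [chiO_of_mem_twoT hT] at hu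
    rw [twoT_eq_image] at hT
    obtain ⟨x, hx, rfl⟩ := hT
    rw [norm_sq_trace_su3block hu1 (trace_qmatInt _ _), show 2 * 2⁻¹ * (x.re : ℝ) = x.re by ring]
    obtain ⟨hlo, hhi⟩ := re_bounds_twoTInt x hx
    interval_cases x.re <;> rcases re_of_pow_four_eq_one hu with h | h | h <;> rw [h] <;> norm_num
  · rw [chiO_of_mem_twoTS hTS] at hu
    obtain ⟨x, hx, rfl⟩ := hTS
    rw [norm_sq_trace_su3block hu1 (trace_qmatInt _ _), ← div_eq_mul_inv, Real.div_sqrt]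
    have he : (√2 * (u ^ 3).re) * (√2 * (u ^ 3).re) = 1 := by
      rw [← sq, mul_pow, Real.sq_sqrt zero_le_two, re_sq_of_pow_four_eq_neg_one hw1 hu]
      norm_num
    obtain ⟨hlo, hhi⟩ := re_bounds_twoTSInt x hx
    intro h
    have h' : (x.re : ℝ) * (x.re + √2 * (u ^ 3).re) = 1 := by
      nlinarith [Real.sq_sqrt (zero_le_two : (0 : ℝ) ≤ 2)]
    interval_cases x.re <;> rcases mul_self_eq_one_iff.mp he with he | he <;> rw [he] at h' <;>
      norm_num at h'

theorem exists_mem_sgOf_BO6_norm_sq_trace_eq_three :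
    ∃ x ∈ sgOf (BO 6), ‖(m3 x).trace‖ ^ 2 = 3 := by
  obtain ⟨x, hx⟩ := exists_m3_eq_su3block (norm_eQ (1 / 12))
    (mem_unitaryGroup_iff.mpr sMat_mul_star_sMat) det_sMat
  refine ⟨x, Subgroup.subset_closure ?_, ?_⟩
  · change m3 x ∈ BO 6
    rw [hx]
    refine su3block_mem_BO sMat_mem_twoO ?_
    rw [chiO_of_mem_twoTS sMat_mem_twoTS, ← eQ_nat_mul, ← eQ_half]
    norm_num
  · rw [hx, norm_sq_trace_su3block (norm_eQ _) trace_sMat, ← eQ_nat_mul,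
      show ((3 : ℕ) : ℚ) * (1 / 12) = 1 / 4 by norm_num, eQ_quarter, Complex.I_re,
      Real.sq_sqrt zero_le_two]
    norm_num

theorem not_exists_map_conj_BO6_le_BO12 :
    ¬ ∃ g : G3, Subgroup.map (MulAut.conj g).toMonoidHom (sgOf (BO 6)) ≤ sgOf (BO 12) := by
  rintro ⟨g, hg⟩
  obtain ⟨x, hx, htr⟩ := exists_mem_sgOf_BO6_norm_sq_trace_eq_three
  have hgx : g * x * g⁻¹ ∈ sgOf (BO 12) := hg (Subgroup.mem_map_of_mem _ hx)
  exact norm_sq_trace_ne_three_of_mem_BO12 (m3_mem_BO_of_mem_sgOf hgx) (by rw [trace_m3_conj, htr])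

end NonConjugacy

theorem statement13_general (Ht : Subgroup (↥(unitary ℂ) × G2))
    (hneg : ∃ x ∈ Ht, (x.1 : ℂ) = -1 ∧ m2 x.2 = -1)
    (hzeta : ∃ x ∈ Ht, (x.1 : ℂ) = eQ (1/3) ∧ m2 x.2 = 1)
    (hproj : (fun p : ↥(unitary ℂ) × G2 => m2 p.2) '' (Ht : Set _) = twoO)
    (H : Subgroup G3)
    (hH : m3 '' (H : Set G3) = piMat '' (Ht : Set _))
    (hrrc : RRC H) :
    (IsConjSub H (sgOf (BO 6)) ∨ IsConjSub H (sgOf (BO 12))) ∧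
    ¬ ∃ g : G3, Subgroup.map (MulAut.conj g).toMonoidHom (sgOf (BO 6)) ≤
      sgOf (BO 12) := by
  have hrat : ∀ x ∈ Ht, ∃ k : ℤ, ‖(piMat x).trace‖ ^ 2 = k := fun x hx => by
    obtain ⟨y, hy, hyx⟩ : piMat x ∈ m3 '' H := hH ▸ ⟨x, hx, rfl⟩
    exact hyx ▸ hrrc y hy
  obtain ⟨xS, hxS, hS⟩ := exists_mem_snd_eq hproj sMat_mem_twoO
  have hconj : ∀ m, (∀ u, u ∈ scalarPart Ht ↔ u ^ m = 1) → IsConjSub H (sgOf (BO m)) := by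
    intro m hC
    have himage := image_piMat_eq_BO hproj hC hxS hS
      (fst_pow_eq_neg_one_of_snd_eq_sMat hproj hrat hC hxS hS)
    refine ⟨1, ?_⟩
    rw [← himage, ← hH, sgOf_image_m3, map_one]
    exact Subgroup.map_id H
  refine ⟨?_, not_exists_map_conj_BO6_le_BO12⟩
  rcases scalarPart_eq_six_or_twelve hproj hneg hzeta hrat with hC | hC
  exacts [Or.inl (hconj 6 hC), Or.inr (hconj 12 hC)]

theorem statement13 (Ht : Subgroup (↥(unitary ℂ) × G2)) (hfin : Finite ↥Ht)
    (hneg : ∃ x ∈ Ht, (x.1 : ℂ) = -1 ∧ m2 x.2 = -1)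
    (hzeta : ∃ x ∈ Ht, (x.1 : ℂ) = eQ (1/3) ∧ m2 x.2 = 1)
    (hproj : (fun p : ↥(unitary ℂ) × G2 => m2 p.2) '' (Ht : Set _) = twoO)
    (H : Subgroup G3)
    (hH : m3 '' (H : Set G3) = piMat '' (Ht : Set _))
    (hrrc : RRC H) :
    (IsConjSub H (sgOf (BO 6)) ∨ IsConjSub H (sgOf (BO 12))) ∧
    ¬ ∃ g : G3, Subgroup.map (MulAut.conj g).toMonoidHom (sgOf (BO 6)) ≤
      sgOf (BO 12) :=
  statement13_general Ht hneg hzeta hproj H hH hrrc
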